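/- arXiv:0812.1745 — 2 statements merged into one kernel-verified Lean document; each statement's English description precedes it below -/
import Mathlib

section
/- The measure μ_R on (0,1) with density 1/x with respect to Lebesgue measure is invariant under the Renyi map: for every Borel set A ⊆ (0,1), μ_R(R⁻¹A) = μ_R(A). Moreover μ_R is σ-finite but infinite (μ_R((0,1)) = ∞). -/
/-!
On `(0,1)` the Renyi map has the inverse branches `y ↦ 1 - 1/(y + n + 1)`, `n ∈ ℕ`, with
disjoint images covering `(0,1)`. By the change of variables formula the branch `n` pulls the
density `1/x` back to `1/((y+n)(y+n+1)) = 1/(y+n) - 1/(y+n+1)`, and these telescope to `1/y`.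
The measure is σ-finite as a measure with a real density, and infinite because `1/x` is not
integrable at `0`.
-/

open MeasureTheory

/-- The Renyi map `R(x) = 1/(1-x) - ⌊1/(1-x)⌋`. -/
noncomputable def renyiMap (x : ℝ) : ℝ := 1 / (1 - x) - ⌊1 / (1 - x)⌋

/-- The measure on `(0,1)` with density `1/x` with respect to Lebesgue measure. -/
noncomputable def muRenyi : Measure ℝ :=
  (volume.restrict (Set.Ioo (0:ℝ) 1)).withDensity (fun x => ENNReal.ofReal (1 / x))

open Set Filter Topology Function

lemma hasSum_one_div_add_mul_add_one {y : ℝ} (hy : 0 < y) :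
    HasSum (fun n : ℕ => 1 / ((y + n) * (y + n + 1))) (1 / y) := by
  have hterm (n : ℕ) :
      1 / ((y + n) * (y + n + 1)) = 1 / (y + n) - 1 / (y + (n + 1 : ℕ)) := by
    have : 0 < y + n := by positivity
    push_cast
    field_simp
    ring
  rw [hasSum_iff_tendsto_nat_of_nonneg (fun n => by positivity)]
  simp_rw [hterm, Finset.sum_range_sub', Nat.cast_zero, add_zero]
  have hlim : Tendsto (fun N : ℕ => 1 / (y + N)) atTop (𝓝 0) :=
    tendsto_const_nhds.div_atTop (tendsto_atTop_add_const_left _ y tendsto_natCast_atTop_atTop)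
  simpa using tendsto_const_nhds.sub hlim

lemma setLIntegral_Ioo_zero_one_ofReal_one_div :
    ∫⁻ x in Ioo (0 : ℝ) 1, ENNReal.ofReal (1 / x) = ⊤ := by
  by_contra h
  have hint : IntegrableOn (fun x : ℝ => 1 / x) (Ioo 0 1) :=
    (lintegral_ofReal_ne_top_iff_integrable (by fun_prop)
      (ae_restrict_of_forall_mem measurableSet_Ioo fun x hx => one_div_nonneg.2 hx.1.le)).1 h
  rw [← intervalIntegrable_iff_integrableOn_Ioo_of_le zero_le_one] at hint
  simp [one_div] at hint

lemma renyiMap_eq_fract (x : ℝ) : renyiMap x = Int.fract (1 / (1 - x)) := rfl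

lemma measurable_renyiMap : Measurable renyiMap := by
  unfold renyiMap; fun_prop

lemma muRenyi_apply {s : Set ℝ} (hs : MeasurableSet s) :
    muRenyi s = ∫⁻ x in s ∩ Ioo 0 1, ENNReal.ofReal (1 / x) := by
  rw [muRenyi, withDensity_apply _ hs, Measure.restrict_restrict hs]

/-- The inverse of `renyiMap` on `[1 - 1/(n+1), 1 - 1/(n+2))`. -/
noncomputable def renyiBranch (n : ℕ) (y : ℝ) : ℝ := 1 - (y + (n + 1))⁻¹

lemma one_div_one_sub_renyiBranch (n : ℕ) (y : ℝ) :
    1 / (1 - renyiBranch n y) = y + (n + 1 : ℕ) := by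
  rw [renyiBranch, sub_sub_cancel, one_div, inv_inv]; push_cast; rfl

lemma renyiBranch_injective (n : ℕ) : Injective (renyiBranch n) :=
  (sub_right_injective.comp inv_injective).comp (add_left_injective _)

lemma measurable_renyiBranch (n : ℕ) : Measurable (renyiBranch n) := by
  unfold renyiBranch; fun_prop

lemma hasDerivAt_renyiBranch (n : ℕ) {y : ℝ} (hy : y + (n + 1) ≠ 0) :
    HasDerivAt (renyiBranch n) ((y + (n + 1)) ^ 2)⁻¹ y := by
  have h := (((hasDerivAt_id' y).add_const ((n : ℝ) + 1)).inv hy).const_sub 1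
  rwa [neg_div, neg_neg, one_div] at h

lemma renyiMap_renyiBranch (n : ℕ) {y : ℝ} (hy : y ∈ Ico 0 1) :
    renyiMap (renyiBranch n y) = y := by
  rw [renyiMap_eq_fract, one_div_one_sub_renyiBranch, Int.fract_add_natCast, Int.fract_eq_self]
  exact hy

lemma floor_one_div_one_sub_renyiBranch (n : ℕ) {y : ℝ} (hy : y ∈ Ico 0 1) :
    ⌊1 / (1 - renyiBranch n y)⌋ = n + 1 := by
  rw [one_div_one_sub_renyiBranch, Int.floor_add_natCast, Int.floor_eq_zero_iff.2 hy]
  push_cast; ring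

lemma renyiBranch_mem_Ioo (n : ℕ) {y : ℝ} (hy : y ∈ Ioo 0 1) :
    renyiBranch n y ∈ Ioo 0 1 := by
  have h : 1 < y + (n + 1) := by linarith [hy.1, (n.cast_nonneg : (0 : ℝ) ≤ n)]
  exact ⟨sub_pos.2 (inv_lt_one_of_one_lt₀ h), sub_lt_self _ (inv_pos.2 (by linarith))⟩

lemma exists_renyiBranch_renyiMap_eq {x : ℝ} (hx : x ∈ Ioo 0 1) :
    ∃ n : ℕ, renyiBranch n (renyiMap x) = x := by
  have hpos : 0 < 1 - x := sub_pos.2 hx.2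
  have hfloor : 0 < ⌊1 / (1 - x)⌋ :=
    Int.floor_pos.2 ((one_le_div hpos).2 (by linarith [hx.1]))
  obtain ⟨n, hn⟩ := Int.eq_succ_of_zero_lt hfloor
  refine ⟨n, ?_⟩
  have hn' : ((⌊1 / (1 - x)⌋ : ℤ) : ℝ) = n + 1 := by exact_mod_cast hn
  rw [renyiBranch, renyiMap, ← hn', sub_add_cancel, one_div, inv_inv, sub_sub_cancel]

lemma pairwise_disjoint_image_renyiBranch {A : Set ℝ} (hA : A ⊆ Ico 0 1) :
    Pairwise (Disjoint on fun n => renyiBranch n '' A) := by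
  refine fun m n hmn => disjoint_left.2 ?_
  rintro _ ⟨y, hy, rfl⟩ ⟨z, hz, hzy⟩
  have := floor_one_div_one_sub_renyiBranch m (hA hy)
  rw [← hzy, floor_one_div_one_sub_renyiBranch n (hA hz)] at this
  exact hmn (by omega)

lemma preimage_renyiMap_inter_Ioo {A : Set ℝ} (hA : A ⊆ Ioo 0 1) :
    renyiMap ⁻¹' A ∩ Ioo 0 1 = ⋃ n, renyiBranch n '' A := by
  ext x
  simp only [mem_inter_iff, mem_preimage, mem_iUnion, mem_image]
  constructor
  · rintro ⟨hxA, hx⟩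
    obtain ⟨n, hn⟩ := exists_renyiBranch_renyiMap_eq hx
    exact ⟨n, renyiMap x, hxA, hn⟩
  · rintro ⟨n, y, hy, rfl⟩
    rw [renyiMap_renyiBranch n (Ioo_subset_Ico_self (hA hy))]
    exact ⟨hy, renyiBranch_mem_Ioo n (hA hy)⟩

lemma inv_sq_mul_one_div_renyiBranch (n : ℕ) {y : ℝ} (hy : 0 < y + n) :
    ((y + (n + 1)) ^ 2)⁻¹ * (1 / renyiBranch n y) = 1 / ((y + n) * (y + n + 1)) := by
  have h1 : y + (n + 1) ≠ 0 := by linarith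
  have h2 : y + n ≠ 0 := hy.ne'
  have hbranch : renyiBranch n y = (y + n) / (y + (n + 1)) := by
    rw [renyiBranch, eq_div_iff h1, sub_mul, inv_mul_cancel₀ h1]
    ring
  rw [hbranch, one_div_div]
  field_simp
  ring

lemma setLIntegral_image_renyiBranch (n : ℕ) {A : Set ℝ} (hA : A ⊆ Ioi 0)
    (hAm : MeasurableSet A) :
    ∫⁻ x in renyiBranch n '' A, ENNReal.ofReal (1 / x)
      = ∫⁻ y in A, ENNReal.ofReal (1 / ((y + n) * (y + n + 1))) := by
  have hpos : ∀ y ∈ A, 0 < y + n := fun y hy => add_pos_of_pos_of_nonneg (hA hy) n.cast_nonneg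
  rw [lintegral_image_eq_lintegral_abs_deriv_mul hAm
    (fun y hy => (hasDerivAt_renyiBranch n (by linarith [hpos y hy])).hasDerivWithinAt)
    (renyiBranch_injective n).injOn]
  refine setLIntegral_congr_fun hAm fun y hy => ?_
  have hy0 := hpos y hy
  rw [abs_of_nonneg (by positivity), ← ENNReal.ofReal_mul (by positivity),
    inv_sq_mul_one_div_renyiBranch n hy0]

theorem muRenyi_preimage_renyiMap {A : Set ℝ} (hA : A ⊆ Ioo 0 1) (hAm : MeasurableSet A) :
    muRenyi (renyiMap ⁻¹' A) = muRenyi A := by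
  have hbranch (n : ℕ) : MeasurableSet (renyiBranch n '' A) :=
    hAm.image_of_measurable_injOn (measurable_renyiBranch n) (renyiBranch_injective n).injOn
  have hApos : A ⊆ Ioi 0 := fun y hy => (hA hy).1
  have hAIco : A ⊆ Ico 0 1 := hA.trans Ioo_subset_Ico_self
  calc muRenyi (renyiMap ⁻¹' A)
      = ∑' n, ∫⁻ x in renyiBranch n '' A, ENNReal.ofReal (1 / x) := by
        rw [muRenyi_apply (measurable_renyiMap hAm), preimage_renyiMap_inter_Ioo hA,
          lintegral_iUnion hbranch (pairwise_disjoint_image_renyiBranch hAIco)]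
    _ = ∫⁻ y in A, ∑' n : ℕ, ENNReal.ofReal (1 / ((y + n) * (y + n + 1))) := by
        rw [lintegral_tsum fun n => by fun_prop]
        exact tsum_congr fun n => setLIntegral_image_renyiBranch n hApos hAm
    _ = ∫⁻ y in A, ENNReal.ofReal (1 / y) := by
        refine setLIntegral_congr_fun hAm fun y hy => ?_
        have hy0 : 0 < y := hApos hy
        have hsum := hasSum_one_div_add_mul_add_one hy0
        rw [← ENNReal.ofReal_tsum_of_nonneg (fun n => by positivity) hsum.summable, hsum.tsum_eq]
    _ = muRenyi A := by rw [muRenyi_apply hAm, inter_eq_self_of_subset_left hA]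

/-- The measure with density `1/x` on `(0,1)` is invariant under the Renyi map;
it is σ-finite but infinite. -/
theorem muRenyi_invariant_sigmaFinite_infinite :
    (∀ A : Set ℝ, A ⊆ Set.Ioo (0:ℝ) 1 → MeasurableSet A →
      muRenyi (renyiMap ⁻¹' A) = muRenyi A) ∧
    SigmaFinite muRenyi ∧ muRenyi (Set.Ioo (0:ℝ) 1) = ⊤ := by
  refine ⟨fun A hA hAm => muRenyi_preimage_renyiMap hA hAm, ?_, ?_⟩
  · exact SigmaFinite.withDensity_ofReal _
  · rw [muRenyi_apply measurableSet_Ioo, inter_self]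
    exact setLIntegral_Ioo_zero_one_ofReal_one_div
end

section
/- The integral of log|G'| with respect to the Gauss measure equals π²/(6 log 2); that is, (1/log 2) ∫₀¹ (-2 log x)/(1+x) dx = π²/(6 log 2). -/
/-!
Expanding `1 / (1 + x) = ∑ (-x) ^ n` and using `∫₀¹ x ^ n (-log x) dx = 1 / (n + 1) ^ 2`, the
integral becomes `∑ (-1) ^ n / (n + 1) ^ 2 = η(2) = π² / 12`. Termwise integration is justified
because the integrals of the absolute values, `1 / (n + 1) ^ 2`, are summable.
-/

open Real Set MeasureTheory

-- Mathlib's Fourier expansion of the Bernoulli polynomial `B₂`, evaluated at `1 / 2`.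
theorem hasSum_neg_one_pow_div_succ_sq :
    HasSum (fun n : ℕ => (-1 : ℝ) ^ n / ((n : ℝ) + 1) ^ 2) (π ^ 2 / 12) := by
  have hB : bernoulliFun 2 2⁻¹ = -12⁻¹ := by rw [bernoulliFun_two]; norm_num
  have hcos (n : ℕ) : cos (2 * π * n * 2⁻¹) = (-1) ^ n := by
    rw [← cos_nat_mul_pi]; ring_nf
  have h := (hasSum_nat_add_iff' 1).2
    (hasSum_one_div_nat_pow_mul_cos one_ne_zero (x := 2⁻¹) (by norm_num))
  rw [bernoulliFun] at hB
  simp only [hcos, mul_one, hB] at h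
  convert h.neg using 1 <;> try rfl
  · funext n
    push_cast
    ring
  · norm_num
    ring

/-- Written with `x * log x` so that continuity at `0` follows from `continuous_mul_log`. -/
noncomputable def powNegLogPrimitive (n : ℕ) (x : ℝ) : ℝ :=
  x ^ (n + 1) / ((n : ℝ) + 1) ^ 2 - x ^ n * (x * log x) / ((n : ℝ) + 1)

theorem continuous_powNegLogPrimitive (n : ℕ) : Continuous (powNegLogPrimitive n) := by
  unfold powNegLogPrimitive
  have := continuous_mul_log
  fun_prop

theorem hasDerivAt_powNegLogPrimitive (n : ℕ) {x : ℝ} (hx : x ≠ 0) :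
    HasDerivAt (powNegLogPrimitive n) (x ^ n * (-log x)) x := by
  refine (((hasDerivAt_pow (n + 1) x).div_const (((n : ℝ) + 1) ^ 2)).sub
    (((hasDerivAt_pow n x).mul (hasDerivAt_mul_log hx)).div_const ((n : ℝ) + 1))).congr_deriv ?_
  rcases n with _ | n
  · simp
  · push_cast
    field_simp
    ring

theorem pow_mul_neg_log_nonneg (n : ℕ) {x : ℝ} (hx : x ∈ Ioc (0 : ℝ) 1) :
    0 ≤ x ^ n * (-log x) :=
  mul_nonneg (pow_nonneg hx.1.le n) (neg_nonneg.2 (log_nonpos hx.1.le hx.2))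

theorem integrableOn_pow_mul_neg_log (n : ℕ) :
    IntegrableOn (fun x => x ^ n * (-log x)) (Ioc 0 1) :=
  intervalIntegral.integrableOn_deriv_of_nonneg (continuous_powNegLogPrimitive n).continuousOn
    (fun _ hx => hasDerivAt_powNegLogPrimitive n hx.1.ne')
    (fun _ hx => pow_mul_neg_log_nonneg n (Ioo_subset_Ioc_self hx))

theorem integral_pow_mul_neg_log (n : ℕ) :
    ∫ x in Ioo (0 : ℝ) 1, x ^ n * (-log x) = 1 / ((n : ℝ) + 1) ^ 2 := by
  rw [← integral_Ioc_eq_integral_Ioo, ← intervalIntegral.integral_of_le zero_le_one,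
    intervalIntegral.integral_eq_sub_of_hasDerivAt_of_le zero_le_one
      (continuous_powNegLogPrimitive n).continuousOn
      (fun _ hx => hasDerivAt_powNegLogPrimitive n hx.1.ne')
      ((intervalIntegrable_iff_integrableOn_Ioc_of_le zero_le_one).2
        (integrableOn_pow_mul_neg_log n))]
  simp [powNegLogPrimitive]

theorem integral_neg_log_div_one_add :
    ∫ x in Ioo (0 : ℝ) 1, -log x / (1 + x) = π ^ 2 / 12 := by
  set F : ℕ → ℝ → ℝ := fun n x => (-1) ^ n * (x ^ n * (-log x))
  have hF_int (n : ℕ) : Integrable (F n) (volume.restrict (Ioo 0 1)) :=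
    ((integrableOn_pow_mul_neg_log n).mono_set Ioo_subset_Ioc_self).const_mul _
  have hF_integral (n : ℕ) : ∫ x in Ioo (0 : ℝ) 1, F n x = (-1) ^ n / ((n : ℝ) + 1) ^ 2 := by
    rw [integral_const_mul, integral_pow_mul_neg_log, mul_one_div]
  have hF_norm (n : ℕ) : ∫ x in Ioo (0 : ℝ) 1, ‖F n x‖ = 1 / ((n : ℝ) + 1) ^ 2 := by
    rw [← integral_pow_mul_neg_log n]
    refine setIntegral_congr_fun measurableSet_Ioo fun x hx => ?_
    rw [norm_mul, norm_pow, norm_neg, norm_one, one_pow, one_mul,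
      norm_of_nonneg (pow_mul_neg_log_nonneg n (Ioo_subset_Ioc_self hx))]
  have hF_summable : Summable fun n => ∫ x in Ioo (0 : ℝ) 1, ‖F n x‖ := by
    simp_rw [hF_norm]
    exact_mod_cast (summable_nat_add_iff 1).2 (summable_one_div_nat_pow.2 one_lt_two)
  have hF_tsum : ∀ x ∈ Ioo (0 : ℝ) 1, ∑' n, F n x = -log x / (1 + x) := by
    intro x hx
    have hx_norm : ‖-x‖ < 1 := by rw [norm_neg, norm_of_nonneg hx.1.le]; exact hx.2
    simp_rw [F, ← mul_assoc, ← mul_pow, neg_one_mul]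
    rw [tsum_mul_right, tsum_geometric_of_norm_lt_one hx_norm, sub_neg_eq_add, inv_mul_eq_div]
  rw [← setIntegral_congr_fun measurableSet_Ioo hF_tsum,
    ← integral_tsum_of_summable_integral_norm hF_int hF_summable]
  simp_rw [hF_integral]
  exact hasSum_neg_one_pow_div_succ_sq.tsum_eq

/-- The integral of `log |G'|` with respect to the Gauss measure equals
`π²/(6 log 2)`: `(1/log 2) ∫₀¹ (-2 log x)/(1+x) dx = π²/(6 log 2)`. -/
theorem gauss_lyapunov_integral :
    (1 / Real.log 2) * ∫ x in Set.Ioo (0:ℝ) 1, (-2 * Real.log x) / (1 + x) =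
      Real.pi ^ 2 / (6 * Real.log 2) := by
  simp_rw [neg_mul_comm, mul_div_assoc, integral_const_mul, integral_neg_log_div_one_add]
  have hlog : log 2 ≠ 0 := (log_pos one_lt_two).ne'
  field_simp
  ring
end
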